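/- In type B_n with simple roots α_i = ε_i - ε_{i+1} (i < n), α_n = ε_n, one has Δ(n ∩ n^{w_k⁺}) = {ε₁ - ε_j : j = 2, ..., n-k+1} for 1 ≤ k ≤ n-1, and Δ(n ∩ n^{w_n⁺}) = ∅. -/

import Mathlib

open scoped BigOperators

/-- The standard basis vector `ε_{i+1}` (0-indexed `i`) of `ℚⁿ`. -/
def eN (n : ℕ) (i : ℕ) : Fin n → ℚ := fun j => if (j : ℕ) = i then 1 else 0

/-- The positive roots of type `B_n`:
`ε_i - ε_j`, `ε_i + ε_j` (`i < j`) and `ε_i`. -/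
def PosB (n : ℕ) : Set (Fin n → ℚ) :=
  {v | (∃ i, i < n ∧ v = eN n i) ∨
    ∃ i j, i < j ∧ j < n ∧ (v = eN n i - eN n j ∨ v = eN n i + eN n j)}

/-- The length of a Weyl group element, i.e. the number of positive roots it
sends to negative roots. -/
noncomputable def lenB (n : ℕ) (w : (Fin n → ℚ) → (Fin n → ℚ)) : ℕ :=
  Set.ncard {β | β ∈ PosB n ∧ -(w β) ∈ PosB n}

/-- The linear action on `ℚⁿ` of the cycle `(1, 2, …, i+1)` (1-indexed) on the
coordinates: it sends `ε_a ↦ ε_{π(a)}` where `π = Fin.cycleRange i`. -/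
def cycAct (n : ℕ) (i : Fin n) : (Fin n → ℚ) → (Fin n → ℚ) :=
  fun v j => v ((Fin.cycleRange i)⁻¹ j)

/-- The longest element `w₀ = -Id` of `W(B_n)`. -/
def w0B (n : ℕ) : (Fin n → ℚ) → (Fin n → ℚ) := fun v => -v

/-- The reflection `σ_{ε₁}` in `ε₁`, negating the first coordinate. -/
def sigB (n : ℕ) : (Fin n → ℚ) → (Fin n → ℚ) := fun v j => if (j : ℕ) = 0 then -(v j) else v j

/-- `w_k⁺ = w₀ ∘ w̃_k`, where `w̃_k` is the cycle `(1, 2, …, n-k+1)`,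
realized with `i = ⟨n - k, _⟩`. -/
def wplus (n : ℕ) (i : Fin n) : (Fin n → ℚ) → (Fin n → ℚ) := w0B n ∘ cycAct n i

/-- `w_k⁻ = w₀ ∘ σ_{ε₁} ∘ w̃_k`. -/
def wminus (n : ℕ) (i : Fin n) : (Fin n → ℚ) → (Fin n → ℚ) := w0B n ∘ sigB n ∘ cycAct n i

/-- The noncompact positive roots of `B_n` (for `SO_e(2, 2n-1)`):
`ε₁`, `ε₁ - ε_j` and `ε₁ + ε_j` for `j ≥ 2`. -/
def NCpos (n : ℕ) : Set (Fin n → ℚ) :=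
  {v | v = eN n 0 ∨ ∃ j, 1 ≤ j ∧ j < n ∧ (v = eN n 0 - eN n j ∨ v = eN n 0 + eN n j)}

/-! ### Auxiliary lemmas -/

lemma sum_eN' {n i : ℕ} (hi : i < n) (c : Fin n → ℚ) :
    ∑ t : Fin n, eN n i t * c t = c ⟨i, hi⟩ := by
  rw [Finset.sum_eq_single ⟨i, hi⟩]
  · simp [eN]
  · intro b _ hb
    have : (b : ℕ) ≠ i := fun h => hb (Fin.ext h)
    simp [eN, this]
  · simp

lemma posB_weight' {n : ℕ} {v : Fin n → ℚ} (h : v ∈ PosB n) :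
    0 < ∑ t : Fin n, v t * ((n : ℚ) - t) := by
  obtain ⟨i, hi, rfl⟩ | ⟨i, j, hij, hj, rfl | rfl⟩ := h
  · rw [sum_eN' hi]
    have : (i : ℚ) < n := by exact_mod_cast hi
    show (0:ℚ) < (n : ℚ) - ((⟨i, hi⟩ : Fin n) : ℕ)
    rw [Fin.val_mk]
    linarith
  · have hi : i < n := by omega
    simp only [Pi.sub_apply, sub_mul, Finset.sum_sub_distrib, sum_eN' hi, sum_eN' hj, Fin.val_mk]
    have : (i : ℚ) < j := by exact_mod_cast hij
    linarith
  · have hi : i < n := by omega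
    simp only [Pi.add_apply, add_mul, Finset.sum_add_distrib, sum_eN' hi, sum_eN' hj, Fin.val_mk]
    have h1 : (i : ℚ) < n := by exact_mod_cast hi
    have h2 : (j : ℚ) < n := by exact_mod_cast hj
    linarith

lemma not_pos_negE {n a : ℕ} (ha : a < n) : -eN n a ∉ PosB n := by
  intro h
  have hw := posB_weight' h
  simp only [Pi.neg_apply, neg_mul, Finset.sum_neg_distrib, sum_eN' ha, Fin.val_mk] at hw
  have : (a : ℚ) < n := by exact_mod_cast ha
  linarith

lemma not_pos_negsub {n a b : ℕ} (ha : a < n) (hb : b < n) :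
    -eN n a - eN n b ∉ PosB n := by
  intro h
  have hw := posB_weight' h
  simp only [Pi.sub_apply, Pi.neg_apply, sub_mul, neg_mul, Finset.sum_sub_distrib,
    Finset.sum_neg_distrib, sum_eN' ha, sum_eN' hb, Fin.val_mk] at hw
  have h1 : (a : ℚ) < n := by exact_mod_cast ha
  have h2 : (b : ℚ) < n := by exact_mod_cast hb
  linarith

lemma not_pos_sub {n a b : ℕ} (ha : a < n) (hba : b < a) : eN n a - eN n b ∉ PosB n := by
  intro h
  have hw := posB_weight' h
  have hb : b < n := by omega
  simp only [Pi.sub_apply, sub_mul, Finset.sum_sub_distrib, sum_eN' ha, sum_eN' hb,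
    Fin.val_mk] at hw
  have : (b : ℚ) < a := by exact_mod_cast hba
  linarith

lemma mem_wplus_image (n : ℕ) (i : Fin n) (S : Set (Fin n → ℚ)) (β : Fin n → ℚ) :
    β ∈ wplus n i '' S ↔ (fun t => -(β (Fin.cycleRange i t))) ∈ S := by
  constructor
  · rintro ⟨γ, hγ, rfl⟩
    convert hγ using 1
    funext t
    simp [wplus, w0B, cycAct, Equiv.Perm.coe_inv, Equiv.symm_apply_apply]
  · intro h
    exact ⟨_, h, by funext t; simp [wplus, w0B, cycAct, Equiv.Perm.coe_inv, Equiv.apply_symm_apply]⟩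

lemma cr_gt {n : ℕ} (i t : Fin n) (h : (i : ℕ) < t) : Fin.cycleRange i t = t := by
  obtain ⟨m, rfl⟩ : ∃ m, n = m + 1 := ⟨n - 1, by omega⟩
  exact Fin.cycleRange_of_gt h

lemma cr_lt {n : ℕ} (i t : Fin n) (h : (t : ℕ) < i) : (Fin.cycleRange i t : ℕ) = t + 1 := by
  obtain ⟨m, rfl⟩ : ∃ m, n = m + 1 := ⟨n - 1, by omega⟩
  exact Fin.coe_cycleRange_of_lt h

lemma cr_self {n : ℕ} (i : Fin n) : (Fin.cycleRange i i : ℕ) = 0 := by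
  have hn := i.pos
  obtain ⟨m, rfl⟩ : ∃ m, n = m + 1 := ⟨n - 1, by omega⟩
  rw [Fin.cycleRange_self]; rfl

lemma cr_eq_zero {n : ℕ} (i t : Fin n) : ((Fin.cycleRange i t : ℕ) = 0) ↔ (t : ℕ) = i := by
  constructor
  · intro h
    rcases lt_trichotomy ((t : ℕ)) ((i : ℕ)) with hlt | heq | hgt
    · rw [cr_lt i t hlt] at h; omega
    · exact heq
    · rw [cr_gt i t hgt] at h; omega
  · intro h
    have : t = i := Fin.ext h
    rw [this, cr_self]

lemma inv_e0 (n : ℕ) (i : Fin n) :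
    (fun t => -((eN n 0) (Fin.cycleRange i t))) = -eN n (i : ℕ) := by
  funext t
  simp only [eN, Pi.neg_apply, cr_eq_zero i t]

/-- Computation of `(w_k⁺)⁻¹ (ε₁ ∓ ε_j)`. -/
lemma inv_sub_form (n : ℕ) (i : Fin n) {j : ℕ} (hjn : j < n) (hj1 : 1 ≤ j) :
    ∃ a : ℕ, a < n ∧ a ≠ (i : ℕ) ∧ (a < (i : ℕ) ↔ j ≤ (i : ℕ)) ∧
      (fun t => -((eN n 0 - eN n j) (Fin.cycleRange i t))) = eN n a - eN n (i : ℕ) ∧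
      (fun t => -((eN n 0 + eN n j) (Fin.cycleRange i t))) = -eN n (i : ℕ) - eN n a := by
  set s : Fin n := (Fin.cycleRange i)⁻¹ ⟨j, hjn⟩ with hs
  have hps : Fin.cycleRange i s = ⟨j, hjn⟩ := Equiv.apply_symm_apply _ _
  have hval : (Fin.cycleRange i s : ℕ) = j := by rw [hps]
  have hne : (s : ℕ) ≠ (i : ℕ) := by
    intro h
    have h2 : s = i := Fin.ext h
    rw [h2, cr_self] at hval
    omega
  have hiff : (s : ℕ) < (i : ℕ) ↔ j ≤ (i : ℕ) := by
    constructor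
    · intro h
      rw [cr_lt i s h] at hval
      omega
    · intro h
      rcases lt_trichotomy ((s : ℕ)) ((i : ℕ)) with h' | h' | h'
      · exact h'
      · exact absurd h' hne
      · rw [cr_gt i s h'] at hval
        omega
  have hcond : ∀ t : Fin n, ((Fin.cycleRange i t : ℕ) = j ↔ (t : ℕ) = (s : ℕ)) := by
    intro t
    constructor
    · intro h
      have h2 : Fin.cycleRange i t = ⟨j, hjn⟩ := Fin.ext h
      have h3 := congrArg (⇑(Fin.cycleRange i)⁻¹) h2
      rw [show ∀ x, (Fin.cycleRange i)⁻¹ (Fin.cycleRange i x) = x from fun x => Equiv.symm_apply_apply _ x] at h3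
      rw [← hs] at h3
      exact congrArg Fin.val h3
    · intro h
      have h2 : t = s := Fin.ext h
      rw [h2, hval]
  refine ⟨(s : ℕ), s.isLt, hne, hiff, ?_, ?_⟩
  · funext t
    simp only [eN, Pi.sub_apply, Pi.neg_apply, cr_eq_zero i t, hcond t]
    ring
  · funext t
    simp only [eN, Pi.add_apply, Pi.sub_apply, Pi.neg_apply, cr_eq_zero i t, hcond t]
    ring

lemma key (n : ℕ) (i : Fin n) :
    {β | β ∈ NCpos n ∧ β ∈ PosB n ∧ β ∈ wplus n i '' PosB n} =
      {β | ∃ j, 1 ≤ j ∧ j ≤ (i : ℕ) ∧ β = eN n 0 - eN n j} := by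
  ext β
  simp only [Set.mem_setOf_eq, mem_wplus_image]
  constructor
  · rintro ⟨hnc, _hpos, hinv⟩
    obtain rfl | ⟨j, hj1, hjn, rfl | rfl⟩ := hnc
    · exfalso
      rw [inv_e0 n i] at hinv
      exact not_pos_negE i.isLt hinv
    · obtain ⟨a, han, hne, hiff, hsub, _⟩ := inv_sub_form n i hjn hj1
      refine ⟨j, hj1, ?_, rfl⟩
      by_contra hji
      have hia : (i : ℕ) < a := by omega
      rw [hsub] at hinv
      exact not_pos_sub han hia hinv
    · exfalso
      obtain ⟨a, han, hne, hiff, _, hadd⟩ := inv_sub_form n i hjn hj1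
      rw [hadd] at hinv
      exact not_pos_negsub i.isLt han hinv
  · rintro ⟨j, hj1, hji, rfl⟩
    have hjn : j < n := lt_of_le_of_lt hji i.isLt
    obtain ⟨a, han, hne, hiff, hsub, _⟩ := inv_sub_form n i hjn hj1
    refine ⟨Or.inr ⟨j, hj1, hjn, Or.inl rfl⟩,
      Or.inr ⟨0, j, by omega, hjn, Or.inl rfl⟩, ?_⟩
    rw [hsub]
    exact Or.inr ⟨a, (i : ℕ), hiff.mpr hji, i.isLt, Or.inl rfl⟩


/-- `Δ(n ∩ n^{w_k⁺}) = {ε₁ - ε_j : j = 2, …, n-k+1}` for `1 ≤ k ≤ n-1`, and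
`Δ(n ∩ n^{w_n⁺}) = ∅`, where `Δ(n ∩ n^w)` is the set of noncompact roots lying
in `Δ⁺ ∩ w(Δ⁺)`. -/
theorem stmt5 (n k : ℕ) (hn : 1 ≤ n) (hk1 : 1 ≤ k) (hkn : k ≤ n) :
    (k ≤ n - 1 →
      {β | β ∈ NCpos n ∧ β ∈ PosB n ∧ β ∈ wplus n ⟨n - k, by omega⟩ '' PosB n} =
        {β | ∃ j, 1 ≤ j ∧ j ≤ n - k ∧ β = eN n 0 - eN n j}) ∧
    (k = n →
      {β | β ∈ NCpos n ∧ β ∈ PosB n ∧ β ∈ wplus n ⟨n - k, by omega⟩ '' PosB n} = ∅) := by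
  constructor
  · intro _
    exact key n ⟨n - k, by omega⟩
  · intro hk
    rw [key n ⟨n - k, by omega⟩]
    ext β
    simp only [Set.mem_setOf_eq, Set.mem_empty_iff_false, iff_false]
    rintro ⟨j, hj1, hji, _⟩
    omega
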